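/- Let y₁,…,y_{i−1} ∈ ℝ^d and consider the geometric graph on the i points {0, y₁,…,y_{i−1}} with edges between points at Euclidean distance less than 1. Then the Lebesgue measure (on ℝ^{d(i−1)}) of the set of tuples (y₁,…,y_{i−1}) for which this graph is connected is at most i^{i−2}·θ_d^{i−1}, where θ_d is the volume of the unit ball in ℝ^d. -/

import Mathlib

open scoped Classical
open Metric MeasureTheory

/-- The geometric graph on points `x : Fin m → ℝ^d` with connectivity radius `r`. -/
def geomGraph {d m : ℕ} (r : ℝ) (x : Fin m → EuclideanSpace ℝ (Fin d)) :
    SimpleGraph (Fin m) :=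
  SimpleGraph.fromRel (fun a b => dist (x a) (x b) < r)

/-!
If the geometric graph is connected, giving every point `y j` a neighbour strictly closer to `0`
in graph distance yields a rooted spanning tree, i.e. a parent map `q` whose edges are all
shorter than `1`. For a fixed parent map, `y ↦ (y a - y (q a))ₐ` is `1 - N` with `N` nilpotent,
so it preserves Lebesgue measure and maps the admissible configurations onto a product of unit
balls: their volume is exactly `θ_d ^ n`. It remains to count parent maps (Cayley's formula).
Splitting a rooted forest on `p` vertices with `k` roots into the children of the roots and the
forest on the remaining vertices rooted at those children gives `(p + k) F(p, k) ≤ k (p + k) ^ p`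
by induction on `p`, via `∑ⱼ C(p, j) j kʲ p^(p-j) = p k (p + k)^(p-1)`.
-/

open Finset

universe u

/-- `q a = .inl r` makes the root `r` the parent of `a`, `q a = .inr b` the vertex `b`;
`D` is a height function showing that following parents always ends at a root. -/
def IsRootedForest {α β : Type*} (q : α → β ⊕ α) : Prop :=
  ∃ D : α → ℕ, ∀ a b, q a = .inr b → D b < D a

section Volume

variable {E : Type*} [NormedAddCommGroup E] [NormedSpace ℝ E] {α β : Type*}

def parentShift (q : α → β ⊕ α) : (α → E) →ₗ[ℝ] α → E :=
  LinearMap.pi fun a => Sum.elim 0 LinearMap.proj (q a)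

lemma parentShift_apply (q : α → β ⊕ α) (y : α → E) (a : α) :
    parentShift q y a = Sum.elim (0 : β → E) y (q a) := by
  simp only [parentShift, LinearMap.pi_apply]
  rcases q a with r | b <;> rfl

def shortEdgeSet (r : ℝ) (q : α → β ⊕ α) : Set (α → E) :=
  {y | ∀ a, dist (y a) (Sum.elim (0 : β → E) y (q a)) < r}

lemma shortEdgeSet_eq_preimage (r : ℝ) (q : α → β ⊕ α) :
    shortEdgeSet r q
      = ⇑(1 - parentShift q : Module.End ℝ (α → E)) ⁻¹' Set.univ.pi fun _ => ball 0 r := by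
  ext y
  simp [shortEdgeSet, dist_eq_norm, parentShift_apply]

variable [Fintype α]

lemma isNilpotent_parentShift {q : α → β ⊕ α} (hq : IsRootedForest q) :
    IsNilpotent (parentShift (E := E) q) := by
  obtain ⟨D, hD⟩ := hq
  have hvanish : ∀ m y a, D a < m → (parentShift (E := E) q ^ m) y a = 0 := by
    intro m
    induction m with
    | zero => intro y a h; omega
    | succ m ih =>
      intro y a h
      rw [pow_succ', Module.End.mul_apply, parentShift_apply]
      rcases hqa : q a with r | b
      · rfl
      · exact ih y b (by have := hD a b hqa; omega)
  exact ⟨univ.sup D + 1, LinearMap.ext fun y => funext fun a =>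
    hvanish _ y a (Nat.lt_succ_of_le (le_sup (mem_univ a)))⟩

variable [FiniteDimensional ℝ E]

lemma det_one_sub_parentShift {q : α → β ⊕ α} (hq : IsRootedForest q) :
    LinearMap.det (1 - parentShift (E := E) q) = 1 := by
  have := LinearMap.eval_charpoly (parentShift (E := E) q) 1
  rw [(isNilpotent_parentShift hq).charpoly_eq_X_pow_finrank] at this
  simpa using this.symm

variable [MeasureSpace E] [BorelSpace E] [(volume : Measure E).IsAddHaarMeasure]

theorem volume_shortEdgeSet {q : α → β ⊕ α} (hq : IsRootedForest q) (r : ℝ) :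
    volume (shortEdgeSet (E := E) r q) = volume (ball (0 : E) r) ^ Fintype.card α := by
  rw [shortEdgeSet_eq_preimage,
    Measure.addHaar_preimage_linearMap _ (by simp [det_one_sub_parentShift hq]),
    det_one_sub_parentShift hq, volume_pi_pi]
  simp

end Volume

section Counting

variable {α β : Type*}

lemma IsRootedForest.isEmpty [Finite α] [IsEmpty β] {q : α → β ⊕ α} (hq : IsRootedForest q) :
    IsEmpty α := by
  obtain ⟨D, hD⟩ := hq
  by_contra h
  rw [not_isEmpty_iff] at h
  obtain ⟨a, ha⟩ := Finite.exists_min D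
  rcases hqa : q a with r | b
  · exact isEmptyElim r
  · exact (ha b).not_gt (hD a b hqa)

variable [Fintype α]

def rootChildren (q : α → β ⊕ α) : Finset α := {a | (q a).isLeft}

lemma card_rootedForest_eq_sum_fiber [Finite β] :
    Nat.card {q : α → β ⊕ α // IsRootedForest q}
      = ∑ S : Finset α,
          Nat.card {q : {q : α → β ⊕ α // IsRootedForest q} // rootChildren q.1 = S} := by
  rw [Nat.card_congr (Equiv.sigmaFiberEquiv fun q : {q : α → β ⊕ α // IsRootedForest q} =>
    rootChildren q.1).symm, Nat.card_sigma]

/-- The forest is recovered from the roots of the root children and from the forest on the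
other vertices in which the root children become the roots. -/
lemma card_rootedForest_fiber_le [Fintype β] (S : Finset α) :
    Nat.card {q : {q : α → β ⊕ α // IsRootedForest q} // rootChildren q.1 = S}
      ≤ Fintype.card β ^ #S *
        Nat.card {q : {a // a ∉ S} → {a // a ∈ S} ⊕ {a // a ∉ S} // IsRootedForest q} := by
  let Fiber := {q : {q : α → β ⊕ α // IsRootedForest q} // rootChildren q.1 = S}
  have hleft (q : Fiber) (a : α) : (q.1.1 a).isLeft ↔ a ∈ S := by
    obtain ⟨q, rfl⟩ := q
    simp [rootChildren]
  let root (q : Fiber) (a : {a // a ∈ S}) : β := (q.1.1 a).getLeft ((hleft q a).2 a.2)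
  let parent (q : Fiber) (a : {a // a ∉ S}) : {a // a ∈ S} ⊕ {a // a ∉ S} :=
    (Equiv.sumCompl (· ∈ S)).symm <| (q.1.1 a).getRight <|
      Sum.not_isLeft.1 ((hleft q a).not.2 a.2)
  have hroot (q : Fiber) (a : {a // a ∈ S}) : q.1.1 a = .inl (root q a) :=
    (Sum.inl_getLeft _ _).symm
  have hparent (q : Fiber) (a : {a // a ∉ S}) :
      q.1.1 a = .inr (Equiv.sumCompl _ (parent q a)) := by
    rw [Equiv.apply_symm_apply, Sum.inr_getRight]
  have hforest (q : Fiber) : IsRootedForest (parent q) := by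
    obtain ⟨D, hD⟩ := q.1.2
    refine ⟨fun a => D a, fun a b h => hD a b ?_⟩
    simpa only [h, Equiv.sumCompl_apply_inr] using hparent q a
  refine (Nat.card_le_card_of_injective (β := _ × {q // IsRootedForest q})
    (fun q : Fiber => (root q, ⟨parent q, hforest q⟩)) fun q₁ q₂ h => ?_).trans_eq ?_
  · simp only [Prod.mk.injEq, Subtype.mk.injEq] at h
    ext1; ext1; funext a
    by_cases ha : a ∈ S
    · rw [hroot q₁ ⟨a, ha⟩, hroot q₂ ⟨a, ha⟩, h.1]
    · rw [hparent q₁ ⟨a, ha⟩, hparent q₂ ⟨a, ha⟩, h.2]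
  · simp [Nat.card_eq_fintype_card]

end Counting

lemma sum_choose_mul_pow_mul_pow (m k : ℕ) :
    ∑ j ∈ range (m + 2), (m + 1).choose j * (k ^ j * (j * (m + 1) ^ (m + 1 - j)))
      = (m + 1) * (k * (m + 1 + k) ^ m) := by
  rw [sum_range_succ', add_comm (m + 1) k, add_pow k (m + 1) m, mul_sum, mul_sum]
  simp only [zero_mul, mul_zero, add_zero, Nat.cast_id, Nat.add_sub_add_right]
  refine sum_congr rfl fun i _ => ?_
  calc (m + 1).choose (i + 1) * (k ^ (i + 1) * ((i + 1) * (m + 1) ^ (m - i)))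
      = ((m + 1).choose (i + 1) * (i + 1)) * k * (k ^ i * (m + 1) ^ (m - i)) := by ring
    _ = (m + 1) * (k * (k ^ i * (m + 1) ^ (m - i) * m.choose i)) := by
        rw [← Nat.add_one_mul_choose_eq]; ring

theorem card_rootedForest_le {α β : Type u} [Fintype α] [Fintype β] :
    (Fintype.card α + Fintype.card β) * Nat.card {q : α → β ⊕ α // IsRootedForest q}
      ≤ Fintype.card β * (Fintype.card α + Fintype.card β) ^ Fintype.card α := by
  induction hp : Fintype.card α using Nat.strong_induction_on generalizing α β with
  | _ p ih =>
  obtain rfl | ⟨m, rfl⟩ : p = 0 ∨ ∃ m, p = m + 1 := by rcases p with _ | m <;> simp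
  · have : IsEmpty α := Fintype.card_eq_zero_iff.1 hp
    have : Nat.card {q : α → β ⊕ α // IsRootedForest q} ≤ 1 :=
      Finite.card_le_one_iff_subsingleton.2 inferInstance
    simpa using Nat.mul_le_mul_left (Fintype.card β) this
  set k := Fintype.card β
  have hfiber (S : Finset α) :
      (m + 1) * Nat.card {q : {q : α → β ⊕ α // IsRootedForest q} // rootChildren q.1 = S}
        ≤ k ^ #S * (#S * (m + 1) ^ (m + 1 - #S)) := by
    have hcard : Fintype.card {a // a ∉ S} = m + 1 - #S := by
      simp [Fintype.card_subtype_compl, hp]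
    have hS : #S ≤ m + 1 := hp ▸ card_le_univ S
    refine (Nat.mul_le_mul_left _ (card_rootedForest_fiber_le S)).trans ?_
    rw [mul_left_comm]
    refine Nat.mul_le_mul_left _ ?_
    rcases S.eq_empty_or_nonempty with rfl | hne
    · have : IsEmpty {q : {a // a ∉ (∅ : Finset α)} → {a // a ∈ (∅ : Finset α)} ⊕ _ //
          IsRootedForest q} :=
        ⟨fun q => by have := q.2.isEmpty; rw [Fintype.card_eq_zero, card_empty] at hcard; omega⟩
      simp
    · have := ih _ (by have := hne.card_pos; omega) (α := {a // a ∉ S}) (β := {a // a ∈ S}) hcard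
      rwa [Fintype.card_coe, Nat.sub_add_cancel hS] at this
  have hsum : (m + 1) * Nat.card {q : α → β ⊕ α // IsRootedForest q}
      ≤ (m + 1) * (k * (m + 1 + k) ^ m) := calc
    _ = ∑ S : Finset α, (m + 1) *
          Nat.card {q : {q : α → β ⊕ α // IsRootedForest q} // rootChildren q.1 = S} := by
        rw [card_rootedForest_eq_sum_fiber, mul_sum]
    _ ≤ ∑ S : Finset α, k ^ #S * (#S * (m + 1) ^ (m + 1 - #S)) := sum_le_sum fun S _ => hfiber S
    _ = (m + 1) * (k * (m + 1 + k) ^ m) := by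
        rw [← powerset_univ, sum_powerset_apply_card (fun j => k ^ j * (j * (m + 1) ^ (m + 1 - j))),
          card_univ, hp, ← sum_choose_mul_pow_mul_pow]
        simp
  calc _ ≤ (m + 1 + k) * (k * (m + 1 + k) ^ m) :=
        Nat.mul_le_mul_left _ (Nat.le_of_mul_le_mul_left hsum m.succ_pos)
    _ = _ := by ring

theorem card_rootedTree_le {α : Type u} [Fintype α] :
    Nat.card {q : α → PUnit.{u + 1} ⊕ α // IsRootedForest q}
      ≤ (Fintype.card α + 1) ^ (Fintype.card α - 1) := by
  have := card_rootedForest_le (α := α) (β := PUnit)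
  rw [Fintype.card_punit, one_mul] at this
  rcases h : Fintype.card α with _ | m
  · simpa [h] using this
  · rw [h, pow_succ'] at this
    exact Nat.le_of_mul_le_mul_left this (Nat.succ_pos _)

theorem SimpleGraph.Connected.exists_adj_dist_lt {V : Type*} {G : SimpleGraph V}
    (hG : G.Connected) {v r : V} (hv : v ≠ r) : ∃ u, G.Adj v u ∧ G.dist u r < G.dist v r := by
  obtain ⟨p, hp⟩ := hG.exists_walk_length_eq_dist v r
  cases p with
  | nil => exact absurd rfl hv
  | cons h p' =>
    refine ⟨_, h, ?_⟩
    have := SimpleGraph.dist_le p'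
    simp only [SimpleGraph.Walk.length_cons] at hp
    omega

lemma geomGraph_adj {d m : ℕ} (r : ℝ) (x : Fin m → EuclideanSpace ℝ (Fin d)) (a b : Fin m) :
    (geomGraph r x).Adj a b ↔ a ≠ b ∧ dist (x a) (x b) < r := by
  simp [geomGraph, dist_comm (x b)]

lemma exists_isRootedForest_of_connected {d n : ℕ} {y : Fin n → EuclideanSpace ℝ (Fin d)}
    {r : ℝ} (h : (geomGraph r (Fin.cons 0 y)).Connected) :
    ∃ q : Fin n → Unit ⊕ Fin n, IsRootedForest q ∧ y ∈ shortEdgeSet r q := by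
  set G := geomGraph r (Fin.cons 0 y)
  choose u hadj hlt using fun j : Fin n => h.exists_adj_dist_lt (Fin.succ_ne_zero j)
  let toSum : Fin (n + 1) → Unit ⊕ Fin n := Fin.cases (.inl ()) .inr
  refine ⟨fun j => toSum (u j), ⟨fun j => G.dist j.succ 0, fun j b hb => ?_⟩, fun j => ?_⟩
  · rcases Fin.eq_zero_or_eq_succ (u j) with h0 | ⟨c, hc⟩
    · simp [toSum, h0] at hb
    · simp only [toSum, hc, Fin.cases_succ, Sum.inr.injEq] at hb
      simpa [hb, hc] using hlt j
  · have hpos : Sum.elim (0 : Unit → EuclideanSpace ℝ (Fin d)) y (toSum (u j))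
        = (Fin.cons 0 y : Fin (n + 1) → EuclideanSpace ℝ (Fin d)) (u j) := by
      cases u j using Fin.cases <;> rfl
    simpa [hpos] using ((geomGraph_adj _ _ _ _).1 (hadj j)).2

theorem volume_connected_tuples_le_general (d n : ℕ) :
    volume {y : Fin n → EuclideanSpace ℝ (Fin d) |
        (geomGraph 1 (Fin.cons (0 : EuclideanSpace ℝ (Fin d)) y)).Connected}
      ≤ ENNReal.ofReal (((n + 1 : ℕ) : ℝ) ^ (n - 1) *
          (volume (Metric.ball (0 : EuclideanSpace ℝ (Fin d)) 1)).toReal ^ n) := by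
  set θ := volume (ball (0 : EuclideanSpace ℝ (Fin d)) 1)
  calc _ ≤ volume (⋃ q : {q : Fin n → Unit ⊕ Fin n // IsRootedForest q}, shortEdgeSet 1 q.1) :=
        measure_mono fun y hy => by
          obtain ⟨q, hq, hy⟩ := exists_isRootedForest_of_connected hy
          exact Set.mem_iUnion.2 ⟨⟨q, hq⟩, hy⟩
    _ ≤ ∑ q : {q : Fin n → Unit ⊕ Fin n // IsRootedForest q}, volume (shortEdgeSet 1 q.1) :=
        measure_iUnion_fintype_le _ _
    _ = Nat.card {q : Fin n → Unit ⊕ Fin n // IsRootedForest q} * θ ^ n := by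
        rw [sum_congr rfl fun q _ => volume_shortEdgeSet q.2 1]
        simp [θ, Nat.card_eq_fintype_card]
    _ ≤ ((n + 1) ^ (n - 1) : ℕ) * θ ^ n := by
        gcongr
        simpa using card_rootedTree_le (α := Fin n)
    _ = _ := by
        rw [ENNReal.ofReal_mul (by positivity), ENNReal.ofReal_pow ENNReal.toReal_nonneg,
          ENNReal.ofReal_toReal measure_ball_lt_top.ne, ← Nat.cast_pow, ENNReal.ofReal_natCast]

/-- The Lebesgue measure of the set of tuples `(y₁,…,y_{i−1})` for which the geometric graph
on `{0, y₁,…,y_{i−1}}` (here `i = n + 1` points) with radius `1` is connected is at most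
`i^{i−2}·θ_d^{i−1}`. -/
theorem volume_connected_tuples_le (d n : ℕ) (hd : 1 ≤ d) :
    volume {y : Fin n → EuclideanSpace ℝ (Fin d) |
        (geomGraph 1 (Fin.cons (0 : EuclideanSpace ℝ (Fin d)) y)).Connected}
      ≤ ENNReal.ofReal (((n + 1 : ℕ) : ℝ) ^ (n - 1) *
          (volume (Metric.ball (0 : EuclideanSpace ℝ (Fin d)) 1)).toReal ^ n) :=
  volume_connected_tuples_le_general d n
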